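/- Let a, b be positive semidefinite n×n matrices and q an orthogonal projection. Then tr(√(q |ab|² q)) ≥ tr(|ab| q). -/

import Mathlib

/-! With `m = |ab|` we have `tr (m q) = tr (q m q)`. Since
`q m² q - (q m q)² = (q m (1 - q)) (q m (1 - q))ᴴ ≥ 0`, operator monotonicity of the square root
gives `q m q ≤ √(q m² q)`, and the trace is monotone. -/

open Matrix ComplexOrder

/-- The positive semidefinite square root of a positive semidefinite matrix
(the definition `Matrix.PosSemidef.sqrt` of the older Mathlib, since removed). -/
noncomputable def Matrix.PosSemidef.sqrt {n : Type*} [Fintype n] [DecidableEq n]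
    {𝕜 : Type*} [RCLike 𝕜] {A : Matrix n n 𝕜} (hA : A.PosSemidef) : Matrix n n 𝕜 :=
  hA.1.eigenvectorUnitary.1 * diagonal ((↑) ∘ (Real.sqrt ∘ hA.1.eigenvalues)) *
  (star hA.1.eigenvectorUnitary : Matrix n n 𝕜)

variable {n : Type*} [Fintype n] [DecidableEq n]

/-- The modulus `|x| = (xᴴ x)^{1/2}` of a square complex matrix. -/
noncomputable def matAbs (x : Matrix n n ℂ) : Matrix n n ℂ :=
  (Matrix.posSemidef_conjTranspose_mul_self x).sqrt

namespace IsStarProjection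

theorem sq_mul_mul_le_mul_sq_mul {R : Type*} [Ring R] [StarRing R] [PartialOrder R]
    [StarOrderedRing R] {p a : R} (hp : IsStarProjection p) (ha : IsSelfAdjoint a) :
    (p * a * p) ^ 2 ≤ p * a ^ 2 * p := by
  have hp_star : star p = p := hp.isSelfAdjoint.star_eq
  have hp_idem : p * p = p := hp.isIdempotentElem.eq
  have h_sub : p * a ^ 2 * p - (p * a * p) ^ 2 =
      star ((1 - p) * a * p) * ((1 - p) * a * p) := by
    simp only [star_mul, star_sub, star_one, hp_star, ha.star_eq, sq]
    simp only [sub_mul, mul_sub, one_mul, mul_one, mul_assoc]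
    simp only [← mul_assoc, hp_idem]
    abel
  exact sub_nonneg.mp (h_sub ▸ star_mul_self_nonneg _)

theorem mul_mul_le_sqrt_mul_sq_mul {A : Type*} [CStarAlgebra A] [PartialOrder A]
    [StarOrderedRing A] {p a : A} (hp : IsStarProjection p) (ha : 0 ≤ a) :
    p * a * p ≤ CFC.sqrt (p * a ^ 2 * p) := by
  have hpap : 0 ≤ p * a * p := by
    simpa only [hp.isSelfAdjoint.star_eq] using star_left_conjugate_nonneg ha p
  calc p * a * p = CFC.sqrt ((p * a * p) ^ 2) := (CFC.sqrt_sq _ hpap).symm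
    _ ≤ CFC.sqrt (p * a ^ 2 * p) :=
      CFC.sqrt_le_sqrt _ _ (hp.sq_mul_mul_le_mul_sq_mul ha.isSelfAdjoint)

end IsStarProjection

open scoped MatrixOrder

theorem Matrix.PosSemidef.sqrt_eq_cfcSqrt {𝕜 : Type*} [RCLike 𝕜] {A : Matrix n n 𝕜}
    (hA : A.PosSemidef) : hA.sqrt = CFC.sqrt A := by
  rw [CFC.sqrt_eq_cfc, cfc_nnreal_eq_real _ A, hA.1.cfc_eq]
  simp only [IsHermitian.cfc, Unitary.conjStarAlgAut_apply, PosSemidef.sqrt, Real.coe_sqrt,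
    Real.coe_toNNReal']
  congr 3
  funext i
  simp [max_eq_left (hA.eigenvalues_nonneg i)]

theorem matAbs_nonneg (x : Matrix n n ℂ) : 0 ≤ matAbs x := by
  simpa only [matAbs, PosSemidef.sqrt_eq_cfcSqrt] using CFC.sqrt_nonneg _

open scoped Matrix.Norms.L2Operator

theorem trace_sqrt_sandwich_ge_general {d : ℕ} (a b q : Matrix (Fin d) (Fin d) ℂ)
    (hq1 : qᴴ = q) (hq2 : q * q = q)
    (hS : (q * (matAbs (a * b) * matAbs (a * b)) * q).PosSemidef) :
    ((matAbs (a * b) * q).trace).re ≤ (hS.sqrt.trace).re := by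
  set m := matAbs (a * b)
  have hq : IsStarProjection q := ⟨hq2, hq1⟩
  have hle : q * m * q ≤ hS.sqrt := by
    rw [hS.sqrt_eq_cfcSqrt, ← sq]
    exact hq.mul_mul_le_sqrt_mul_sq_mul (matAbs_nonneg _)
  calc (m * q).trace.re = (q * m * q).trace.re := by rw [trace_mul_cycle, hq2, trace_mul_comm]
    _ ≤ hS.sqrt.trace.re := Complex.re_le_re ((tracePositiveLinearMap _ ℂ ℂ).monotone' hle)

/-- for `a, b ≥ 0` and an orthogonal projection `q`,
`tr √(q |ab|² q) ≥ tr (|ab| q)`. -/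
theorem trace_sqrt_sandwich_ge {d : ℕ} (a b q : Matrix (Fin d) (Fin d) ℂ)
    (ha : a.PosSemidef) (hb : b.PosSemidef)
    (hq1 : qᴴ = q) (hq2 : q * q = q)
    (hS : (q * (matAbs (a * b) * matAbs (a * b)) * q).PosSemidef) :
    ((matAbs (a * b) * q).trace).re ≤ (hS.sqrt.trace).re :=
  trace_sqrt_sandwich_ge_general a b q hq1 hq2 hS
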